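/- Assume μ₁ and μ₂ are in convex order, μ₂ has compact support in (0,∞) with s₂ᵈ = min supp(μ₂) and s₂ᵘ = max supp(μ₂), and let s₁ᵈ = min supp(μ₁). Then each of the following conditions implies P_super < σ₁₂: (i) E¹[λ_b(S₁)] < σ₁₂; (ii) L(s₁ᵈ) − ℓ₁ > L(s₂ᵈ) − ℓ₂ (which holds in particular if s₁ᵈ = s₂ᵈ and μ₁ ≠ μ₂); (iii) μ₁(A) > 0, where A = (s₂ᵈ, λ_{b,−}⁻¹(σ₁₂)) ∪ (λ_{b,+}⁻¹(σ₁₂), s₂ᵘ) (in this case σ₁₂ ≤ λ̄_b, so A is well defined). -/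

import Mathlib

/-!
A portfolio holding `-a(S₁)` forward-starting log contracts turns the VIX payoff `v` into
`1/(4a) + a v² ≥ v`. Completed by static legs read off the binomial model on `{s₂ᵈ, s₂ᵘ}`, it
superreplicates at price `E¹[1/(4a) + (a - b) Λ_b(S₁)] + b σ₁₂²` for any weight `a ≥ b`. The
constant weight `b = 1/(2σ₁₂)` costs exactly `σ₁₂`, and each condition yields a cheaper weight:
`a ≈ 1/(2λ_b)` under (i); under (ii) and (iii) the weight is raised slightly on a `μ₁`-charged set
where `Λ_b < σ₁₂²`, found near `s₁ᵈ` by continuity, resp. off the roots of `λ_b = σ₁₂` by the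
intermediate value theorem. The special case of (ii) needs `ℓ₁ < ℓ₂` for `μ₁ ≠ μ₂`: there are
smoothed puts `φ` with both `φ` and `L - cφ` convex, so `ℓ₁ = ℓ₂` would equate all put prices.
-/

open MeasureTheory Set Filter

noncomputable section

/-- The log-contract payoff `L(x) = -(2/τ) ln x`. -/
def Lf (τ x : ℝ) : ℝ := -(2 / τ) * Real.log x

/-- `μ` is a market smile: a probability measure concentrated on `(0,∞)`
with mean `S₀` and integrable logarithm. -/
structure IsMarginal (S₀ : ℝ) (μ : Measure ℝ) : Prop where
  prob : IsProbabilityMeasure μ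
  conc : μ (Set.Ioi (0 : ℝ))ᶜ = 0
  int_id : Integrable (fun s => s) μ
  mean : (∫ s, s ∂μ) = S₀
  int_log : Integrable (fun s => |Real.log s|) μ

/-- A superreplicating portfolio for the VIX future. -/
structure IsSuperRep (τ : ℝ) (μ₁ μ₂ : Measure ℝ) (u₁ u₂ : ℝ → ℝ)
    (ΔS ΔL : ℝ → ℝ → ℝ) : Prop where
  meas_u₁ : Measurable u₁
  meas_u₂ : Measurable u₂
  meas_ΔS : Measurable (Function.uncurry ΔS)
  meas_ΔL : Measurable (Function.uncurry ΔL)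
  int_u₁ : Integrable u₁ μ₁
  int_u₂ : Integrable u₂ μ₂
  hedge : ∀ s₁ s₂ v : ℝ, 0 < s₁ → 0 < s₂ → 0 ≤ v →
    v ≤ u₁ s₁ + u₂ s₂ + ΔS s₁ v * (s₂ - s₁) + ΔL s₁ v * (Lf τ (s₂ / s₁) - v ^ 2)

/-- `P_super`: the infimum of superreplication prices, as an extended real. -/
def PsuperE (τ : ℝ) (μ₁ μ₂ : Measure ℝ) : EReal :=
  sInf {y : EReal | ∃ u₁ u₂ ΔS ΔL, IsSuperRep τ μ₁ μ₂ u₁ u₂ ΔS ΔL ∧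
    y = (((∫ s, u₁ s ∂μ₁) + ∫ s, u₂ s ∂μ₂ : ℝ) : EReal)}

/-- `μ₁` and `μ₂` are in convex order on `(0,∞)`. -/
def ConvexOrder (μ₁ μ₂ : Measure ℝ) : Prop :=
  ∀ f : ℝ → ℝ, ConvexOn ℝ (Set.Ioi 0) f → Integrable f μ₁ → Integrable f μ₂ →
    (∫ s, f s ∂μ₁) ≤ ∫ s, f s ∂μ₂

/-- The binomial transition probability `π_u`. -/
def piU (s₂d s₂u s : ℝ) : ℝ := (s - s₂d) / (s₂u - s₂d)

/-- The binomial transition probability `π_d`. -/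
def piD (s₂d s₂u s : ℝ) : ℝ := (s₂u - s) / (s₂u - s₂d)

/-- `Λ_b(s₁)`: the binomial-model price at `T₁` of the FSLC. -/
def Lb (τ s₂d s₂u s : ℝ) : ℝ :=
  piU s₂d s₂u s * Lf τ (s₂u / s) + piD s₂d s₂u s * Lf τ (s₂d / s)

/-- `λ_b = √Λ_b`. -/
def lamb (τ s₂d s₂u s : ℝ) : ℝ := Real.sqrt (Lb τ s₂d s₂u s)

/-- `λ̄_b = max_{[s₂d,s₂u]} λ_b`. -/
def lamBar (τ s₂d s₂u : ℝ) : ℝ := sSup (lamb τ s₂d s₂u '' Set.Icc s₂d s₂u)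

open Topology

theorem Lf_div {τ x y : ℝ} (hx : 0 < x) (hy : 0 < y) : Lf τ (x / y) = Lf τ x - Lf τ y := by
  simp only [Lf, Real.log_div hx.ne' hy.ne']; ring

theorem Lf_one (τ : ℝ) : Lf τ 1 = 0 := by simp [Lf]

@[fun_prop]
theorem measurable_Lf (τ : ℝ) : Measurable (Lf τ) := Real.measurable_log.const_mul _

theorem hasDerivAt_Lf (τ : ℝ) {x : ℝ} (hx : x ≠ 0) : HasDerivAt (Lf τ) (-(2 / τ) * x⁻¹) x :=
  (Real.hasDerivAt_log hx).const_mul _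

theorem convexOn_Lf {τ : ℝ} (hτ : 0 < τ) : ConvexOn ℝ (Ioi 0) (Lf τ) :=
  (strictConcaveOn_log_Ioi.concaveOn.smul (by positivity : (0 : ℝ) ≤ 2 / τ)).neg.congr
    fun s _ => by simp [Lf, neg_mul]

theorem Lf_le_Lf_of_le {τ x y : ℝ} (hτ : 0 < τ) (hx : 0 < x) (hxy : x ≤ y) : Lf τ y ≤ Lf τ x := by
  have := Real.log_le_log hx hxy
  simp only [Lf]
  nlinarith [show (0 : ℝ) < 2 / τ by positivity]

namespace IsMarginal

variable {S₀ : ℝ} {μ : Measure ℝ}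

theorem ae_pos (h : IsMarginal S₀ μ) : ∀ᵐ s ∂μ, 0 < s :=
  measure_mono_null (fun s hs => by simpa using hs) h.conc

theorem integrable_Lf (h : IsMarginal S₀ μ) (τ : ℝ) : Integrable (Lf τ) μ :=
  (h.int_log.mono' Real.measurable_log.aestronglyMeasurable
    (ae_of_all _ fun _ => le_of_eq (Real.norm_eq_abs _))).const_mul _

theorem integrable_affine (h : IsMarginal S₀ μ) (c m : ℝ) : Integrable (fun s => c + m * s) μ :=
  have := h.prob; (integrable_const c).add (h.int_id.const_mul m)

theorem integral_affine (h : IsMarginal S₀ μ) (c m : ℝ) : ∫ s, (c + m * s) ∂μ = c + m * S₀ := by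
  have := h.prob
  rw [integral_add (integrable_const c) (h.int_id.const_mul m), integral_const_mul, h.mean]
  simp

theorem integrable_put (h : IsMarginal S₀ μ) (K : ℝ) : Integrable (fun s => max (K - s) 0) μ :=
  (h.integrable_affine K (-1)).pos_part.congr (ae_of_all _ fun s => by ring_nf)

end IsMarginal

theorem mem_Icc_of_forall_measure_Ico_ne_zero {μ : Measure ℝ} {d u c : ℝ}
    (hμ : μ (Icc d u)ᶜ = 0) (hc : ∀ δ : ℝ, 0 < δ → μ (Ico c (c + δ)) ≠ 0) : c ∈ Icc d u := by
  by_contra hc'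
  obtain ⟨l, hcl, hsub⟩ := exists_Ico_subset_of_mem_nhds (isClosed_Icc.isOpen_compl.mem_nhds hc')
    ⟨c + 1, lt_add_one c⟩
  exact hc (l - c) (sub_pos.2 hcl) (measure_mono_null (by rwa [add_sub_cancel]) hμ)

namespace ConvexOrder

variable {S₀ : ℝ} {μ₁ μ₂ : Measure ℝ}

theorem integral_Lf_le {τ : ℝ} (hτ : 0 < τ) (h₁ : IsMarginal S₀ μ₁) (h₂ : IsMarginal S₀ μ₂)
    (hord : ConvexOrder μ₁ μ₂) : ∫ s, Lf τ s ∂μ₁ ≤ ∫ s, Lf τ s ∂μ₂ :=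
  hord _ (convexOn_Lf hτ) (h₁.integrable_Lf τ) (h₂.integrable_Lf τ)

theorem sq_sqrt_integral_Lf_sub {τ : ℝ} (hτ : 0 < τ)
    (h₁ : IsMarginal S₀ μ₁) (h₂ : IsMarginal S₀ μ₂) (hord : ConvexOrder μ₁ μ₂) :
    Real.sqrt (∫ s, Lf τ s ∂μ₂ - ∫ s, Lf τ s ∂μ₁) ^ 2 = ∫ s, Lf τ s ∂μ₂ - ∫ s, Lf τ s ∂μ₁ :=
  Real.sq_sqrt (sub_nonneg.2 (hord.integral_Lf_le hτ h₁ h₂))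

/-- The distance to `[d, u]` is convex and vanishes `μ₂`-a.e., hence also `μ₁`-a.e. -/
theorem measure_compl_Icc {d u : ℝ} (h₁ : IsMarginal S₀ μ₁) (h₂ : IsMarginal S₀ μ₂)
    (hord : ConvexOrder μ₁ μ₂) (hsupp₂ : μ₂ (Icc d u)ᶜ = 0) : μ₁ (Icc d u)ᶜ = 0 := by
  set f : ℝ → ℝ := fun s => max (d - s) 0 + max (-u + s) 0
  have hf_nonneg : 0 ≤ f := fun s => add_nonneg (le_max_right _ _) (le_max_right _ _)
  have hconv : ConvexOn ℝ (Ioi 0) f :=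
    ((convexOn_const d (convex_Ioi 0)).sub (concaveOn_id (convex_Ioi 0))).sup
        (convexOn_const 0 (convex_Ioi 0)) |>.add
      (((convexOn_const (-u) (convex_Ioi 0)).add (convexOn_id (convex_Ioi 0))).sup
        (convexOn_const 0 (convex_Ioi 0)))
  have hint : ∀ {μ : Measure ℝ}, IsMarginal S₀ μ → Integrable f μ := fun h =>
    (h.integrable_put d).add ((h.integrable_affine (-u) 1).pos_part.congr
      (ae_of_all _ fun s => by simp))
  have hf₂ : f =ᵐ[μ₂] 0 := by
    filter_upwards [measure_eq_zero_iff_ae_notMem.mp hsupp₂] with s hs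
    simp only [mem_compl_iff, not_not, mem_Icc] at hs
    simp [f, hs.1, hs.2]
  have hf₁ : f =ᵐ[μ₁] 0 := by
    refine (integral_eq_zero_iff_of_nonneg hf_nonneg (hint h₁)).mp (le_antisymm ?_
      (integral_nonneg hf_nonneg))
    calc ∫ s, f s ∂μ₁ ≤ ∫ s, f s ∂μ₂ := hord f hconv (hint h₁) (hint h₂)
      _ = 0 := by simp [integral_congr_ae hf₂]
  refine measure_mono_null (fun s hs => ?_) (ae_iff.mp hf₁)
  simp only [mem_compl_iff, mem_Icc, not_and_or, not_le] at hs
  refine ne_of_gt ?_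
  rcases hs with hs | hs
  · exact add_pos_of_pos_of_nonneg (lt_max_of_lt_left (by linarith)) (le_max_right _ _)
  · exact add_pos_of_nonneg_of_pos (le_max_right _ _) (lt_max_of_lt_left (by linarith))

end ConvexOrder

section Binomial

variable {τ d u : ℝ}

/-- The chord of `Lf τ` over `[d, u]`, i.e. the price of `L(S₂)` in the binomial model on `{d, u}`
as an affine function of the current price. -/
def chordLf (τ d u s : ℝ) : ℝ := Lf τ d + (Lf τ u - Lf τ d) / (u - d) * (s - d)

theorem chordLf_eq_affine (s : ℝ) : chordLf τ d u s
    = (Lf τ d - (Lf τ u - Lf τ d) / (u - d) * d) + (Lf τ u - Lf τ d) / (u - d) * s := by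
  simp only [chordLf]; ring

theorem chordLf_add (s₁ s₂ : ℝ) :
    chordLf τ d u s₂ = chordLf τ d u s₁ + (Lf τ u - Lf τ d) / (u - d) * (s₂ - s₁) := by
  simp only [chordLf]; ring

theorem integrable_chordLf {S₀ : ℝ} {μ : Measure ℝ} (h : IsMarginal S₀ μ) :
    Integrable (chordLf τ d u) μ := by
  rw [funext chordLf_eq_affine]; exact h.integrable_affine _ _

theorem integral_chordLf {S₀ : ℝ} {μ : Measure ℝ} (h : IsMarginal S₀ μ) :
    ∫ s, chordLf τ d u s ∂μ = chordLf τ d u S₀ := by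
  simp only [chordLf_eq_affine, h.integral_affine]

theorem Lb_eq_chordLf_sub (h0 : 0 < d) (hdu : d < u) {s : ℝ} (hs : 0 < s) :
    Lb τ d u s = chordLf τ d u s - Lf τ s := by
  have hne : u - d ≠ 0 := sub_ne_zero.2 hdu.ne'
  simp only [Lb, piU, piD, chordLf, Lf_div (h0.trans hdu) hs, Lf_div h0 hs]
  field_simp
  ring

theorem piU_add_piD (hdu : d < u) (s : ℝ) : piU d u s + piD d u s = 1 := by
  have hne : u - d ≠ 0 := sub_ne_zero.2 hdu.ne'
  simp only [piU, piD]; field_simp; ring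

/-- Jensen's inequality for the binomial transition: its mean ratio `S₂ / s` is `1`, and
`L(1) = 0`. -/
theorem Lb_nonneg (hτ : 0 < τ) (h0 : 0 < d) (hdu : d < u) {s : ℝ} (hs : s ∈ Icc d u) :
    0 ≤ Lb τ d u s := by
  have hs0 : 0 < s := h0.trans_le hs.1
  have hne : u - d ≠ 0 := sub_ne_zero.2 hdu.ne'
  have hmean : piU d u s • (u / s) + piD d u s • (d / s) = 1 := by
    simp only [piU, piD, smul_eq_mul]; field_simp; ring
  have : Lf τ (piU d u s • (u / s) + piD d u s • (d / s))
      ≤ piU d u s • Lf τ (u / s) + piD d u s • Lf τ (d / s) := (convexOn_Lf hτ).2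
    (div_pos (h0.trans hdu) hs0) (div_pos h0 hs0)
    (div_nonneg (by linarith [hs.1]) (by linarith)) (div_nonneg (by linarith [hs.2]) (by linarith))
    (piU_add_piD hdu s)
  rw [hmean, Lf_one] at this
  simpa [Lb] using this

theorem Lf_le_chordLf (hτ : 0 < τ) (h0 : 0 < d) (hdu : d < u) {s : ℝ} (hs : s ∈ Icc d u) :
    Lf τ s ≤ chordLf τ d u s := by
  have := Lb_nonneg hτ h0 hdu hs
  rw [Lb_eq_chordLf_sub h0 hdu (h0.trans_le hs.1)] at this
  linarith

theorem Lb_le_Lf_sub_Lf (hτ : 0 < τ) (h0 : 0 < d) (hdu : d < u) {s : ℝ} (hs : d ≤ s) :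
    Lb τ d u s ≤ Lf τ d - Lf τ s := by
  have hs0 : 0 < s := h0.trans_le hs
  have hLf : Lf τ (u / s) ≤ Lf τ (d / s) :=
    Lf_le_Lf_of_le hτ (by positivity) (div_le_div_of_nonneg_right hdu.le hs0.le)
  have hpiU : 0 ≤ piU d u s := div_nonneg (by linarith) (by linarith)
  have hsum := congrArg (· * Lf τ (d / s)) (piU_add_piD hdu s)
  simp only [add_mul, one_mul] at hsum
  rw [← Lf_div h0 hs0, Lb]
  nlinarith [mul_le_mul_of_nonneg_left hLf hpiU]

theorem Lb_left (h0 : d ≠ 0) : Lb τ d u d = 0 := by simp [Lb, piU, piD, Lf, div_self h0]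

theorem Lb_right (hu : u ≠ 0) : Lb τ d u u = 0 := by simp [Lb, piU, piD, Lf, div_self hu]

theorem continuousOn_Lb (h0 : 0 < d) (hdu : d < u) : ContinuousOn (Lb τ d u) (Ioi 0) := by
  have hchord : Continuous (chordLf τ d u) := by
    simp only [funext chordLf_eq_affine]; fun_prop
  have hLf : ContinuousOn (Lf τ) (Ioi 0) :=
    continuousOn_const.mul (Real.continuousOn_log.mono fun s hs => ne_of_gt hs)
  exact (hchord.continuousOn.sub hLf).congr fun s hs => Lb_eq_chordLf_sub h0 hdu hs

@[fun_prop]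
theorem measurable_Lb : Measurable (Lb τ d u) := by
  unfold Lb piU piD Lf; fun_prop

theorem integrable_Lb {S₀ : ℝ} {μ : Measure ℝ} (h : IsMarginal S₀ μ) (h0 : 0 < d) (hdu : d < u) :
    Integrable (Lb τ d u) μ := by
  refine ((integrable_chordLf (τ := τ) (d := d) (u := u) h).sub (h.integrable_Lf τ)).congr ?_
  filter_upwards [h.ae_pos] with s hs using (Lb_eq_chordLf_sub h0 hdu hs).symm

theorem integral_Lb {S₀ : ℝ} {μ : Measure ℝ} (h : IsMarginal S₀ μ) (h0 : 0 < d) (hdu : d < u) :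
    ∫ s, Lb τ d u s ∂μ = chordLf τ d u S₀ - ∫ s, Lf τ s ∂μ := by
  rw [← integral_chordLf h, ← integral_sub (integrable_chordLf h) (h.integrable_Lf τ)]
  exact integral_congr_ae (by filter_upwards [h.ae_pos] with s hs using Lb_eq_chordLf_sub h0 hdu hs)

theorem lamb_nonneg (s : ℝ) : 0 ≤ lamb τ d u s := Real.sqrt_nonneg _

theorem Lb_le_lamb_sq (s : ℝ) : Lb τ d u s ≤ lamb τ d u s ^ 2 := by
  rw [lamb, Real.sq_sqrt']; exact le_max_left _ _

@[fun_prop]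
theorem measurable_lamb : Measurable (lamb τ d u) := measurable_Lb.sqrt

theorem integrable_lamb {S₀ : ℝ} {μ : Measure ℝ} (h : IsMarginal S₀ μ) (h0 : 0 < d)
    (hdu : d < u) : Integrable (lamb τ d u) μ := by
  have := h.prob
  refine ((integrable_const 1).add (integrable_Lb (τ := τ) h h0 hdu).abs).mono'
    measurable_lamb.aestronglyMeasurable (ae_of_all _ fun s => ?_)
  rw [Real.norm_eq_abs, abs_of_nonneg (lamb_nonneg s), lamb, Pi.add_apply, Real.sqrt_le_iff]
  refine ⟨by positivity, ?_⟩
  nlinarith [le_abs_self (Lb τ d u s), abs_nonneg (Lb τ d u s)]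

theorem continuousOn_lamb {τ d u : ℝ} (h0 : 0 < d) (hdu : d < u) :
    ContinuousOn (lamb τ d u) (Icc d u) :=
  Real.continuous_sqrt.comp_continuousOn
    ((continuousOn_Lb h0 hdu).mono fun _ hs => h0.trans_le hs.1)

end Binomial

theorem psuperE_le_of_isSuperRep {τ : ℝ} {μ₁ μ₂ : Measure ℝ} {u₁ u₂ : ℝ → ℝ}
    {ΔS ΔL : ℝ → ℝ → ℝ} (h : IsSuperRep τ μ₁ μ₂ u₁ u₂ ΔS ΔL) :
    PsuperE τ μ₁ μ₂ ≤ ((∫ s, u₁ s ∂μ₁ + ∫ s, u₂ s ∂μ₂ : ℝ) : EReal) :=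
  sInf_le ⟨u₁, u₂, ΔS, ΔL, h, rfl⟩

theorem le_inv_four_mul_add_mul_sq {A : ℝ} (hA : 0 < A) (v : ℝ) : v ≤ 1 / (4 * A) + A * v ^ 2 := by
  have : 0 ≤ (2 * A * v - 1) ^ 2 / (4 * A) := by positivity
  have h : (2 * A * v - 1) ^ 2 / (4 * A) = 1 / (4 * A) + A * v ^ 2 - v := by field_simp; ring
  linarith

/-- At `t = 0` the slope of `1/(4(1/(2σ) + t))` is `-σ²`, so the gain `tδ` wins for small `t`. -/
theorem exists_pos_inv_four_mul_add_lt {σ δ : ℝ} (hσ : 0 < σ) (hδ : 0 < δ) :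
    ∃ t > 0, 1 / (4 * (1 / (2 * σ) + t)) + t * (σ ^ 2 - δ) < σ / 2 := by
  refine ⟨δ / (4 * σ ^ 3), by positivity, ?_⟩
  have key : 1 / (4 * (1 / (2 * σ) + δ / (4 * σ ^ 3))) + δ / (4 * σ ^ 3) * (σ ^ 2 - δ)
      = σ / 2 - δ ^ 2 * (σ ^ 2 + δ) / (4 * σ ^ 3 * (2 * σ ^ 2 + δ)) := by
    field_simp; ring
  rw [key, sub_lt_self_iff]
  positivity

section Superreplication

variable {τ S₀ d u : ℝ} {μ₁ μ₂ : Measure ℝ}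

/-- The portfolio holds `-a(s₁)` forward-starting log contracts, which turns the payoff `v` into
`1/(4a) + a v² ≥ v`. The static term `(M - b)(L - chord)⁺` in `u₂` vanishes on `[d, u]`, where `L`
lies below its chord, and dominates `(a - b)(L - chord)` everywhere since `b ≤ a ≤ M`. -/
theorem psuperE_le_of_weight (hτ : 0 < τ) (h0 : 0 < d) (hdu : d < u)
    (h₁ : IsMarginal S₀ μ₁) (h₂ : IsMarginal S₀ μ₂) (hsupp₂ : μ₂ (Icc d u)ᶜ = 0)
    {a : ℝ → ℝ} {b M : ℝ} (ha : Measurable a) (ha_pos : ∀ s, 0 < a s) (hba : ∀ s, b ≤ a s)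
    (haM : ∀ s, a s ≤ M) {g : ℝ → ℝ} (hg : Integrable g μ₁)
    (hag : ∀ s, 1 / (4 * a s) + (a s - b) * Lb τ d u s ≤ g s) :
    PsuperE τ μ₁ μ₂ ≤ ((∫ s, g s ∂μ₁ + b * (∫ s, Lf τ s ∂μ₂ - ∫ s, Lf τ s ∂μ₁) : ℝ) : EReal) := by
  set m := (Lf τ u - Lf τ d) / (u - d)
  set u₁ : ℝ → ℝ := fun s => 1 / (4 * a s) + (a s - b) * Lb τ d u s - b * Lf τ s
  set u₂ : ℝ → ℝ := fun s => b * Lf τ s + (M - b) * max (Lf τ s - chordLf τ d u s) 0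
  have hu₂ : u₂ =ᵐ[μ₂] fun s => b * Lf τ s := by
    filter_upwards [measure_eq_zero_iff_ae_notMem.mp hsupp₂] with s hs
    rw [notMem_compl_iff] at hs
    simp [u₂, max_eq_right (sub_nonpos.2 (Lf_le_chordLf hτ h0 hdu hs))]
  have hint_delta : Integrable (fun s => (a s - b) * Lb τ d u s) μ₁ :=
    (integrable_Lb h₁ h0 hdu).bdd_mul (ha.sub_const b).aestronglyMeasurable
      (c := M - b) (ae_of_all _ fun s => by
        rw [Real.norm_eq_abs, abs_of_nonneg (sub_nonneg.2 (hba s))]; linarith [haM s])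
  have hint_quarter : Integrable (fun s => 1 / (4 * a s)) μ₁ :=
    (hg.sub hint_delta).mono' (measurable_const.div (ha.const_mul 4)).aestronglyMeasurable
      (ae_of_all _ fun s => by
        rw [Real.norm_eq_abs, abs_of_pos (by have := ha_pos s; positivity), Pi.sub_apply]
        linarith [hag s])
  have hint_main : Integrable (fun s => 1 / (4 * a s) + (a s - b) * Lb τ d u s) μ₁ :=
    hint_quarter.add hint_delta
  have hint₁ : Integrable u₁ μ₁ := hint_main.sub ((h₁.integrable_Lf τ).const_mul b)
  have hrep : IsSuperRep τ μ₁ μ₂ u₁ u₂ (fun s _ => (a s - b) * m) (fun s _ => -a s) := by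
    refine ⟨by unfold u₁; fun_prop, by unfold u₂ chordLf; fun_prop, by fun_prop, by fun_prop,
      hint₁, ((h₂.integrable_Lf τ).const_mul b).congr hu₂.symm, ?_⟩
    intro s₁ s₂ v hs₁ hs₂ _
    set X := Lf τ s₂ - chordLf τ d u s₂
    have hpay : u₁ s₁ + u₂ s₂ + (a s₁ - b) * m * (s₂ - s₁) + -a s₁ * (Lf τ (s₂ / s₁) - v ^ 2)
        = 1 / (4 * a s₁) + a s₁ * v ^ 2 + ((M - b) * max X 0 - (a s₁ - b) * X) := by
      simp only [u₁, u₂, X, Lf_div hs₂ hs₁, Lb_eq_chordLf_sub h0 hdu hs₁, chordLf_add s₁ s₂]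
      ring
    have hX : (a s₁ - b) * X ≤ (M - b) * max X 0 := by
      rcases le_total 0 X with hX | hX
      · rw [max_eq_left hX]; exact mul_le_mul_of_nonneg_right (by linarith [haM s₁]) hX
      · rw [max_eq_right hX, mul_zero]
        exact mul_nonpos_of_nonneg_of_nonpos (sub_nonneg.2 (hba s₁)) hX
    rw [hpay]
    linarith [le_inv_four_mul_add_mul_sq (ha_pos s₁) v]
  refine (psuperE_le_of_isSuperRep hrep).trans (EReal.coe_le_coe_iff.2 ?_)
  have hu₁ : ∫ s, u₁ s ∂μ₁ ≤ ∫ s, g s ∂μ₁ - b * ∫ s, Lf τ s ∂μ₁ := by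
    rw [integral_sub hint_main ((h₁.integrable_Lf τ).const_mul b), integral_const_mul]
    linarith [integral_mono hint_main hg hag]
  rw [integral_congr_ae hu₂, integral_const_mul]
  linarith

/-- Condition (i): the weight `a = 1 / (2 max(λ_b, ε))` nearly minimises
`a ↦ 1/(4a) + a Λ_b` pointwise, with value `≤ λ_b + ε`. -/
theorem psuperE_lt_of_integral_lamb_lt (hτ : 0 < τ) (h0 : 0 < d) (hdu : d < u)
    (h₁ : IsMarginal S₀ μ₁) (h₂ : IsMarginal S₀ μ₂) (hsupp₂ : μ₂ (Icc d u)ᶜ = 0) {σ : ℝ}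
    (hσ : ∫ s, lamb τ d u s ∂μ₁ < σ) : PsuperE τ μ₁ μ₂ < σ := by
  have := h₁.prob
  set ε := (σ - ∫ s, lamb τ d u s ∂μ₁) / 2
  have hε : 0 < ε := by simp only [ε]; linarith
  have hM : ∀ s, 0 < max (lamb τ d u s) ε := fun s => hε.trans_le (le_max_right _ _)
  have hpoint : ∀ s, 1 / (4 * (1 / (2 * max (lamb τ d u s) ε)))
      + (1 / (2 * max (lamb τ d u s) ε) - 0) * Lb τ d u s ≤ lamb τ d u s + ε := fun s => by
    set M := max (lamb τ d u s) ε
    have hl := lamb_nonneg (τ := τ) (d := d) (u := u) s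
    have hΛ : Lb τ d u s / (2 * M) ≤ lamb τ d u s / 2 := by
      rw [div_le_iff₀ (by linarith [hM s])]
      nlinarith [Lb_le_lamb_sq (τ := τ) (d := d) (u := u) s, le_max_left (lamb τ d u s) ε]
    have hquarter : 1 / (4 * (1 / (2 * M))) = M / 2 := by field_simp [(hM s).ne']; ring
    rw [hquarter, sub_zero, one_div_mul_eq_div]
    linarith [max_le_add_of_nonneg hl hε.le]
  have hbound := psuperE_le_of_weight hτ h0 hdu h₁ h₂ hsupp₂
    (a := fun s => 1 / (2 * max (lamb τ d u s) ε)) (b := 0) (M := 1 / (2 * ε))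
    (g := fun s => lamb τ d u s + ε) (by fun_prop)
    (fun s => by have := hM s; positivity) (fun s => by have := hM s; positivity)
    (fun s => one_div_le_one_div_of_le (by positivity)
      (by linarith [le_max_right (lamb τ d u s) ε]))
    ((integrable_lamb h₁ h0 hdu).add (integrable_const ε)) hpoint
  refine hbound.trans_lt (EReal.coe_lt_coe_iff.2 ?_)
  rw [zero_mul, add_zero, integral_add (integrable_lamb h₁ h0 hdu) (integrable_const ε)]
  simp only [integral_const, probReal_univ, one_smul, ε]
  linarith

/-- Starting from the constant weight `b = 1/(2σ)`, whose price is exactly `σ`, raising the weight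
by `t` on a `μ₁`-charged set where `Λ_b ≤ σ² - δ` lowers the price strictly. -/
theorem psuperE_lt_of_Lb_le (hτ : 0 < τ) (h0 : 0 < d) (hdu : d < u)
    (h₁ : IsMarginal S₀ μ₁) (h₂ : IsMarginal S₀ μ₂) (hsupp₂ : μ₂ (Icc d u)ᶜ = 0) {σ δ : ℝ}
    (hσ : 0 < σ) (hσ2 : σ ^ 2 = ∫ s, Lf τ s ∂μ₂ - ∫ s, Lf τ s ∂μ₁) (hδ : 0 < δ) {U : Set ℝ}
    (hU : MeasurableSet U) (hLb : ∀ s ∈ U, Lb τ d u s ≤ σ ^ 2 - δ) (hμU : μ₁ U ≠ 0) :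
    PsuperE τ μ₁ μ₂ < σ := by
  have := h₁.prob
  obtain ⟨t, ht, hgain⟩ := exists_pos_inv_four_mul_add_lt hσ hδ
  set b := 1 / (2 * σ)
  set η := σ / 2 - (1 / (4 * (b + t)) + t * (σ ^ 2 - δ))
  have hη : 0 < η := sub_pos.2 hgain
  have hpoint : ∀ s, 1 / (4 * (b + U.indicator (fun _ => t) s))
      + (b + U.indicator (fun _ => t) s - b) * Lb τ d u s ≤ σ / 2 - U.indicator (fun _ => η) s := by
    intro s
    by_cases hs : s ∈ U
    · simp only [indicator_of_mem hs, add_sub_cancel_left, η]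
      nlinarith [hLb s hs]
    · simp only [indicator_of_notMem hs, add_zero, sub_self, zero_mul, sub_zero, b]
      exact le_of_eq (by field_simp; ring)
  have hbound := psuperE_le_of_weight hτ h0 hdu h₁ h₂ hsupp₂
    (a := fun s => b + U.indicator (fun _ => t) s) (M := b + t)
    (g := fun s => σ / 2 - U.indicator (fun _ => η) s)
    (measurable_const.add (measurable_const.indicator hU))
    (fun s => add_pos_of_pos_of_nonneg (by positivity) (indicator_nonneg (fun _ _ => ht.le) s))
    (fun s => le_add_of_nonneg_right (indicator_nonneg (fun _ _ => ht.le) s))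
    (fun s => (add_le_add_iff_left b).2 (indicator_le_self' (fun _ _ => ht.le) s))
    ((integrable_const _).sub ((integrable_const η).indicator hU)) hpoint
  refine hbound.trans_lt (EReal.coe_lt_coe_iff.2 ?_)
  have hμU' : 0 < μ₁.real U := ENNReal.toReal_pos hμU (measure_ne_top μ₁ U)
  rw [integral_sub (integrable_const _) ((integrable_const η).indicator hU), integral_indicator hU,
    setIntegral_const, ← hσ2]
  simp only [integral_const, probReal_univ, smul_eq_mul, b]
  field_simp
  nlinarith [mul_pos hμU' hη]

theorem psuperE_lt_of_measure_Lb_lt (hτ : 0 < τ) (h0 : 0 < d) (hdu : d < u)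
    (h₁ : IsMarginal S₀ μ₁) (h₂ : IsMarginal S₀ μ₂) (hord : ConvexOrder μ₁ μ₂)
    (hsupp₂ : μ₂ (Icc d u)ᶜ = 0) {σ : ℝ}
    (hσ : σ = Real.sqrt (∫ s, Lf τ s ∂μ₂ - ∫ s, Lf τ s ∂μ₁))
    (hμ : μ₁ {s | Lb τ d u s < σ ^ 2} ≠ 0) : PsuperE τ μ₁ μ₂ < σ := by
  have hσ2 : σ ^ 2 = ∫ s, Lf τ s ∂μ₂ - ∫ s, Lf τ s ∂μ₁ := by
    rw [hσ, hord.sq_sqrt_integral_Lf_sub hτ h₁ h₂]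
  have hσ_pos : 0 < σ := by
    refine (hσ ▸ Real.sqrt_nonneg _ : 0 ≤ σ).lt_of_ne fun hσ0 => hμ (measure_mono_null ?_
      (hord.measure_compl_Icc h₁ h₂ hsupp₂))
    intro s hs hs'
    rw [mem_ofPred_eq, ← hσ0] at hs
    linarith [Lb_nonneg hτ h0 hdu hs']
  obtain ⟨n, hn⟩ : ∃ n : ℕ, μ₁ {s | Lb τ d u s ≤ σ ^ 2 - 1 / (n + 1)} ≠ 0 := by
    by_contra! h
    refine hμ (measure_mono_null (fun s (hs : Lb τ d u s < σ ^ 2) => ?_) (measure_iUnion_null h))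
    obtain ⟨n, hn⟩ := exists_nat_one_div_lt (sub_pos.2 hs)
    exact mem_iUnion.2 ⟨n, by rw [mem_ofPred_eq]; linarith⟩
  exact psuperE_lt_of_Lb_le hτ h0 hdu h₁ h₂ hsupp₂ hσ_pos hσ2 Nat.one_div_pos_of_nat
    (measurableSet_le measurable_Lb measurable_const) (fun _ hs => hs) hn

/-- Condition (ii): `Λ_b(s₁ᵈ) ≤ L(d) - L(s₁ᵈ) < σ²`, so by continuity `μ₁` charges
`{Λ_b < σ²}` near its lower support point. -/
theorem psuperE_lt_of_Lf_sub_lt (hτ : 0 < τ) (h0 : 0 < d) (hdu : d < u)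
    (h₁ : IsMarginal S₀ μ₁) (h₂ : IsMarginal S₀ μ₂) (hord : ConvexOrder μ₁ μ₂)
    (hsupp₂ : μ₂ (Icc d u)ᶜ = 0) {s₁d : ℝ}
    (hmin₁ : ∀ δ : ℝ, 0 < δ → μ₁ (Ico s₁d (s₁d + δ)) ≠ 0) {σ : ℝ}
    (hσ : σ = Real.sqrt (∫ s, Lf τ s ∂μ₂ - ∫ s, Lf τ s ∂μ₁))
    (h : Lf τ d - ∫ s, Lf τ s ∂μ₂ < Lf τ s₁d - ∫ s, Lf τ s ∂μ₁) : PsuperE τ μ₁ μ₂ < σ := by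
  have hs₁d : s₁d ∈ Icc d u :=
    mem_Icc_of_forall_measure_Ico_ne_zero (hord.measure_compl_Icc h₁ h₂ hsupp₂) hmin₁
  have hlt : Lb τ d u s₁d < σ ^ 2 := by
    rw [hσ, hord.sq_sqrt_integral_Lf_sub hτ h₁ h₂]
    linarith [Lb_le_Lf_sub_Lf hτ h0 hdu hs₁d.1]
  have hnhds : {s | Lb τ d u s < σ ^ 2} ∈ 𝓝 s₁d :=
    ((continuousOn_Lb h0 hdu).continuousAt (Ioi_mem_nhds (h0.trans_le hs₁d.1))).preimage_mem_nhds
      (Iio_mem_nhds hlt)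
  obtain ⟨l, hl, hsub⟩ := exists_Ico_subset_of_mem_nhds hnhds ⟨s₁d + 1, lt_add_one s₁d⟩
  refine psuperE_lt_of_measure_Lb_lt hτ h0 hdu h₁ h₂ hord hsupp₂ hσ fun hnull => ?_
  exact hmin₁ (l - s₁d) (sub_pos.2 hl) (measure_mono_null (by rwa [add_sub_cancel]) hnull)

theorem sqrt_le_lamBar (hτ : 0 < τ) (h0 : 0 < d) (hdu : d < u)
    (h₁ : IsMarginal S₀ μ₁) (h₂ : IsMarginal S₀ μ₂) (hord : ConvexOrder μ₁ μ₂)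
    (hsupp₂ : μ₂ (Icc d u)ᶜ = 0) :
    Real.sqrt (∫ s, Lf τ s ∂μ₂ - ∫ s, Lf τ s ∂μ₁) ≤ lamBar τ d u := by
  have := h₁.prob
  obtain ⟨sm, hsm, hmax⟩ := isCompact_Icc.exists_isMaxOn (nonempty_Icc.2 hdu.le)
    ((continuousOn_Lb (τ := τ) h0 hdu).mono fun _ hs => h0.trans_le hs.1)
  have hE₁ : ∫ s, Lb τ d u s ∂μ₁ ≤ Lb τ d u sm := by
    calc ∫ s, Lb τ d u s ∂μ₁ ≤ ∫ _, Lb τ d u sm ∂μ₁ := by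
          refine integral_mono_ae (integrable_Lb h₁ h0 hdu) (integrable_const _) ?_
          filter_upwards [measure_eq_zero_iff_ae_notMem.mp (hord.measure_compl_Icc h₁ h₂ hsupp₂)]
            with s hs using hmax (notMem_compl_iff.mp hs)
      _ = Lb τ d u sm := by simp
  have hE₂ : 0 ≤ ∫ s, Lb τ d u s ∂μ₂ := integral_nonneg_of_ae <| by
    filter_upwards [measure_eq_zero_iff_ae_notMem.mp hsupp₂]
      with s hs using Lb_nonneg hτ h0 hdu (notMem_compl_iff.mp hs)
  have hdiff : ∫ s, Lf τ s ∂μ₂ - ∫ s, Lf τ s ∂μ₁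
      = ∫ s, Lb τ d u s ∂μ₁ - ∫ s, Lb τ d u s ∂μ₂ := by
    rw [integral_Lb h₁ h0 hdu, integral_Lb h₂ h0 hdu]; ring
  calc Real.sqrt (∫ s, Lf τ s ∂μ₂ - ∫ s, Lf τ s ∂μ₁) ≤ lamb τ d u sm :=
        Real.sqrt_le_sqrt (by linarith)
    _ ≤ lamBar τ d u :=
        le_csSup ((isCompact_Icc.image_of_continuousOn (continuousOn_lamb h0 hdu)).bddAbove)
          (mem_image_of_mem _ hsm)

/-- Condition (iii): by the intermediate value theorem, starting from `λ_b(d) = λ_b(u) = 0`,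
`λ_b < σ` on `(d, rlo) ∪ (rhi, u)`. -/
theorem psuperE_lt_of_measure_Ioo_union_ne_zero (hτ : 0 < τ) (h0 : 0 < d) (hdu : d < u)
    (h₁ : IsMarginal S₀ μ₁) (h₂ : IsMarginal S₀ μ₂) (hord : ConvexOrder μ₁ μ₂)
    (hsupp₂ : μ₂ (Icc d u)ᶜ = 0) {σ : ℝ}
    (hσ : σ = Real.sqrt (∫ s, Lf τ s ∂μ₂ - ∫ s, Lf τ s ∂μ₁)) {rlo rhi : ℝ} (hdr : d ≤ rlo)
    (hr : rlo ≤ rhi) (hru : rhi ≤ u)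
    (hroots : ∀ s : ℝ, d ≤ s → s ≤ u → lamb τ d u s = σ → s = rlo ∨ s = rhi)
    (hμ : μ₁ (Ioo d rlo ∪ Ioo rhi u) ≠ 0) : PsuperE τ μ₁ μ₂ < σ := by
  have hσ0 : 0 ≤ σ := hσ ▸ Real.sqrt_nonneg _
  have hlamb_d : lamb τ d u d = 0 := by simp [lamb, Lb_left h0.ne']
  have hlamb_u : lamb τ d u u = 0 := by simp [lamb, Lb_right (h0.trans hdu).ne']
  have hlt : ∀ s ∈ Ioo d rlo ∪ Ioo rhi u, lamb τ d u s < σ := by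
    rintro s (⟨hds, hsr⟩ | ⟨hrs, hsu⟩) <;> by_contra! hσs
    · obtain ⟨c, hc, hcσ⟩ := intermediate_value_Icc hds.le
        ((continuousOn_lamb h0 hdu).mono (Icc_subset_Icc_right (by linarith))) ⟨hlamb_d ▸ hσ0, hσs⟩
      rcases hroots c hc.1 (by linarith [hc.2]) hcσ with rfl | rfl <;> linarith [hc.2]
    · obtain ⟨c, hc, hcσ⟩ := intermediate_value_Icc' hsu.le
        ((continuousOn_lamb h0 hdu).mono (Icc_subset_Icc_left (by linarith))) ⟨hlamb_u ▸ hσ0, hσs⟩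
      rcases hroots c (by linarith [hc.1]) hc.2 hcσ with rfl | rfl <;> linarith [hc.1]
  refine psuperE_lt_of_measure_Lb_lt hτ h0 hdu h₁ h₂ hord hsupp₂ hσ fun hnull => hμ ?_
  refine measure_mono_null (fun s hs => ?_) hnull
  have := hlt s hs
  have := lamb_nonneg (τ := τ) (d := d) (u := u) s
  exact (Lb_le_lamb_sq s).trans_lt (by nlinarith)

end Superreplication

theorem hasDerivAt_sq_max_zero (x : ℝ) : HasDerivAt (fun y : ℝ => max y 0 ^ 2) (2 * max x 0) x := by
  have hne : ∀ y ≠ 0, HasDerivAt (fun y : ℝ => max y 0 ^ 2) (2 * max y 0) y := by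
    intro y hy
    rcases hy.lt_or_gt with hy | hy
    · have hloc : (fun z : ℝ => max z 0 ^ 2) =ᶠ[𝓝 y] fun _ => 0 := by
        filter_upwards [Iio_mem_nhds hy] with z hz
        simp [max_eq_right (mem_Iio.1 hz).le]
      rw [max_eq_right hy.le, mul_zero]
      exact (hasDerivAt_const y 0).congr_of_eventuallyEq hloc
    · have hloc : (fun z : ℝ => max z 0 ^ 2) =ᶠ[𝓝 y] fun z => z ^ 2 := by
        filter_upwards [Ioi_mem_nhds hy] with z hz
        rw [max_eq_left (mem_Ioi.1 hz).le]
      rw [max_eq_left hy.le]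
      simpa using (hasDerivAt_pow 2 y).congr_of_eventuallyEq hloc
  rcases eq_or_ne x 0 with rfl | hx
  · exact hasDerivAt_of_hasDerivAt_of_ne hne (by fun_prop) (by fun_prop)
  · exact hne x hx

/-- The average over strikes `k ∈ [a, b]` of the put payoffs `(k - s)⁺`. -/
def smoothPut (a b s : ℝ) : ℝ := (max (b - s) 0 ^ 2 - max (a - s) 0 ^ 2) / (2 * (b - a))

section SmoothPut

variable {a b : ℝ}

theorem max_sub_zero_sub_max_sub_zero (hab : a ≤ b) (s : ℝ) :
    max (a - s) 0 - max (b - s) 0 = max a (min b s) - b := by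
  rcases le_total s a with h | h
  · rw [min_eq_right (h.trans hab), max_eq_left h, max_eq_left (by linarith),
      max_eq_left (by linarith)]
    ring
  rcases le_total s b with h' | h'
  · rw [min_eq_right h', max_eq_right h, max_eq_right (by linarith), max_eq_left (by linarith)]
    ring
  · rw [min_eq_left h', max_eq_right hab, max_eq_right (by linarith), max_eq_right (by linarith)]
    ring

theorem hasDerivAt_smoothPut (hab : a ≤ b) (s : ℝ) :
    HasDerivAt (smoothPut a b) ((max a (min b s) - b) / (b - a)) s := by
  have hsq : ∀ c, HasDerivAt (fun x => max (c - x) 0 ^ 2) (2 * max (c - s) 0 * -1) s := fun c =>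
    (hasDerivAt_sq_max_zero (c - s)).comp s ((hasDerivAt_id s).const_sub c)
  refine (((hsq b).sub (hsq a)).div_const (2 * (b - a))).congr_deriv ?_
  rw [← max_sub_zero_sub_max_sub_zero hab]
  rcases hab.eq_or_lt with rfl | hab
  · simp
  · field_simp; ring

theorem monotone_deriv_smoothPut (hab : a ≤ b) : Monotone (deriv (smoothPut a b)) := by
  intro x y hxy
  rw [(hasDerivAt_smoothPut hab x).deriv, (hasDerivAt_smoothPut hab y).deriv]
  gcongr

theorem convexOn_smoothPut (hab : a ≤ b) : ConvexOn ℝ univ (smoothPut a b) :=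
  (monotone_deriv_smoothPut hab).convexOn_univ_of_deriv
    fun s => (hasDerivAt_smoothPut hab s).differentiableAt

theorem max_min_sub_max_min_le (ha : 0 < a) (hab : a ≤ b) {x y : ℝ} (hx : 0 < x) (hxy : x ≤ y) :
    max a (min b y) - max a (min b x) ≤ b ^ 2 * (x⁻¹ - y⁻¹) := by
  have hinv : 0 ≤ x⁻¹ - y⁻¹ := sub_nonneg.2 (inv_anti₀ hx hxy)
  rcases le_total b x with hbx | hxb
  · rw [min_eq_left hbx, min_eq_left (hbx.trans hxy), sub_self]
    exact mul_nonneg (sq_nonneg b) hinv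
  rcases le_total y a with hya | hay
  · rw [min_eq_right (hya.trans hab), min_eq_right (hxy.trans (hya.trans hab)), max_eq_left hya,
      max_eq_left (hxy.trans hya), sub_self]
    exact mul_nonneg (sq_nonneg b) hinv
  set x' := max a x
  set y' := min b y
  have hx' : 0 < x' := lt_max_of_lt_left ha
  have hy'b : y' ≤ b := min_le_left _ _
  have hx'y' : x' ≤ y' := max_le (le_min hab hay) (le_min hxb hxy)
  have hy' : 0 < y' := hx'.trans_le hx'y'
  have h1 : max a (min b y) - max a (min b x) = y' - x' := by
    rw [min_eq_right hxb, max_eq_right (le_min hab hay)]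
  have h2 : y' - x' = x' * y' * (x'⁻¹ - y'⁻¹) := by field_simp
  have h3 : x'⁻¹ - y'⁻¹ ≤ x⁻¹ - y⁻¹ := sub_le_sub (inv_anti₀ hx (le_max_right _ _))
    (inv_anti₀ (hx'.trans_le hx'y') (min_le_right _ _))
  rw [h1, h2]
  calc x' * y' * (x'⁻¹ - y'⁻¹) ≤ b ^ 2 * (x'⁻¹ - y'⁻¹) := by
        gcongr
        · exact sub_nonneg.2 (inv_anti₀ hx' hx'y')
        · nlinarith
    _ ≤ b ^ 2 * (x⁻¹ - y⁻¹) := by gcongr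

/-- The second derivative of the smoothed put is `1/(b - a)` on `[a, b]` and that of `L` is
`(2/τ)/s² ≥ (2/τ)/b²` there, so a small multiple of it can be subtracted from `L`. -/
theorem convexOn_Lf_sub_smoothPut {τ : ℝ} (hτ : 0 < τ) (ha : 0 < a) (hab : a < b) :
    ConvexOn ℝ (Ioi 0) fun s => Lf τ s - 2 / τ * (b - a) / b ^ 2 * smoothPut a b s := by
  have hderiv : ∀ s ∈ Ioi (0 : ℝ), HasDerivAt (fun s => Lf τ s - 2 / τ * (b - a) / b ^ 2 *
      smoothPut a b s) (-(2 / τ) * s⁻¹ - 2 / τ / b ^ 2 * (max a (min b s) - b)) s := by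
    intro s hs
    refine ((hasDerivAt_Lf τ (ne_of_gt hs)).sub
      ((hasDerivAt_smoothPut hab.le s).const_mul (2 / τ * (b - a) / b ^ 2))).congr_deriv ?_
    field_simp [(sub_pos.2 hab).ne']
  refine MonotoneOn.convexOn_of_deriv (convex_Ioi 0)
    (fun s hs => (hderiv s hs).continuousAt.continuousWithinAt)
    (by rw [interior_Ioi]; exact fun s hs => (hderiv s hs).differentiableAt.differentiableWithinAt)
    ?_
  rw [interior_Ioi]
  intro x hx y hy hxy
  rw [(hderiv x hx).deriv, (hderiv y hy).deriv]
  have hkey := max_min_sub_max_min_le ha hab.le (mem_Ioi.1 hx) hxy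
  have hb : 0 < b := ha.trans hab
  have : 2 / τ / b ^ 2 * (max a (min b y) - max a (min b x)) ≤ 2 / τ * (x⁻¹ - y⁻¹) := by
    calc 2 / τ / b ^ 2 * (max a (min b y) - max a (min b x))
        ≤ 2 / τ / b ^ 2 * (b ^ 2 * (x⁻¹ - y⁻¹)) := by gcongr
      _ = 2 / τ * (x⁻¹ - y⁻¹) := by field_simp
  linarith

theorem smoothPut_bounds (hab : a < b) (s : ℝ) :
    max (a - s) 0 ≤ smoothPut a b s ∧ smoothPut a b s ≤ max (b - s) 0 := by
  have hba : 0 < 2 * (b - a) := by linarith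
  simp only [smoothPut, le_div_iff₀ hba, div_le_iff₀ hba]
  rcases le_total s a with h | h
  · rw [max_eq_left (by linarith : 0 ≤ a - s), max_eq_left (by linarith : 0 ≤ b - s)]
    constructor <;> nlinarith
  rcases le_total s b with h' | h'
  · rw [max_eq_right (by linarith : a - s ≤ 0), max_eq_left (by linarith : 0 ≤ b - s)]
    constructor <;> nlinarith
  · rw [max_eq_right (by linarith : a - s ≤ 0), max_eq_right (by linarith : b - s ≤ 0)]
    simp

theorem IsMarginal.integrable_smoothPut {S₀ : ℝ} {μ : Measure ℝ} (h : IsMarginal S₀ μ)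
    (hab : a < b) : Integrable (smoothPut a b) μ :=
  (h.integrable_put b).mono' (by unfold smoothPut; fun_prop) (ae_of_all _ fun s => by
    obtain ⟨h1, h2⟩ := smoothPut_bounds hab s
    rwa [Real.norm_eq_abs, abs_of_nonneg ((le_max_right _ _).trans h1)])

end SmoothPut

section Puts

variable {S₀ : ℝ} {μ ν : Measure ℝ}

theorem IsMarginal.mul_measureReal_Iic_le_integral_put_sub (h : IsMarginal S₀ μ) {x y : ℝ}
    (hxy : x ≤ y) :
    (y - x) * μ.real (Iic x) ≤ ∫ s, max (y - s) 0 ∂μ - ∫ s, max (x - s) 0 ∂μ := by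
  have := h.prob
  rw [← integral_sub (h.integrable_put y) (h.integrable_put x), mul_comm,
    ← smul_eq_mul, ← integral_indicator_const _ measurableSet_Iic]
  refine integral_mono ((integrable_const _).indicator measurableSet_Iic)
    ((h.integrable_put y).sub (h.integrable_put x)) fun s => ?_
  by_cases hs : s ∈ Iic x
  · rw [indicator_of_mem hs, max_eq_left (by linarith [mem_Iic.1 hs]),
      max_eq_left (by linarith [mem_Iic.1 hs])]
    linarith
  · rw [indicator_of_notMem hs,
      max_eq_right (a := x - s) (by linarith [not_le.1 (mt mem_Iic.2 hs)]),
      sub_zero]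
    exact le_max_right _ _

theorem IsMarginal.integral_put_sub_le_mul_measureReal_Iic (h : IsMarginal S₀ μ) {x y : ℝ}
    (hxy : x ≤ y) :
    ∫ s, max (y - s) 0 ∂μ - ∫ s, max (x - s) 0 ∂μ ≤ (y - x) * μ.real (Iic y) := by
  have := h.prob
  rw [← integral_sub (h.integrable_put y) (h.integrable_put x), mul_comm,
    ← smul_eq_mul, ← integral_indicator_const _ measurableSet_Iic]
  refine integral_mono ((h.integrable_put y).sub (h.integrable_put x))
    ((integrable_const _).indicator measurableSet_Iic) fun s => ?_
  by_cases hs : s ∈ Iic y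
  · rw [indicator_of_mem hs, max_eq_left (by linarith [mem_Iic.1 hs])]
    simp only
    linarith [le_max_left (x - s) 0]
  · rw [indicator_of_notMem hs, max_eq_right (by linarith [not_le.1 (mt mem_Iic.2 hs)]),
      max_eq_right (by linarith [not_le.1 (mt mem_Iic.2 hs)])]
    simp

theorem cdf_le_of_integral_put_eq (hμ : IsMarginal S₀ μ) (hν : IsMarginal S₀ ν)
    (h : ∀ K, 0 < K → ∫ s, max (K - s) 0 ∂μ = ∫ s, max (K - s) 0 ∂ν) (x : ℝ) :
    ProbabilityTheory.cdf μ x ≤ ProbabilityTheory.cdf ν x := by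
  have := hμ.prob
  have := hν.prob
  rw [ProbabilityTheory.cdf_eq_real μ]
  rcases le_or_gt x 0 with hx | hx
  · rw [measureReal_def, measure_mono_null (fun s hs => ?_) hμ.conc, ENNReal.toReal_zero]
    · exact ProbabilityTheory.cdf_nonneg ν x
    · exact not_lt.2 ((mem_Iic.1 hs).trans hx)
  refine ge_of_tendsto (((ProbabilityTheory.cdf ν).right_continuous x).mono Ioi_subset_Ici_self)
    (eventually_nhdsWithin_of_forall fun y (hy : x < y) => ?_)
  rw [ProbabilityTheory.cdf_eq_real ν]
  have h1 := hμ.mul_measureReal_Iic_le_integral_put_sub hy.le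
  have h2 := hν.integral_put_sub_le_mul_measureReal_Iic hy.le
  rw [h x hx, h y (hx.trans hy)] at h1
  exact le_of_mul_le_mul_left (h1.trans h2) (sub_pos.2 hy)

theorem eq_of_integral_put_eq (hμ : IsMarginal S₀ μ) (hν : IsMarginal S₀ ν)
    (h : ∀ K, 0 < K → ∫ s, max (K - s) 0 ∂μ = ∫ s, max (K - s) 0 ∂ν) : μ = ν := by
  have := hμ.prob
  have := hν.prob
  refine Measure.eq_of_cdf μ ν (StieltjesFunction.ext fun x =>
    le_antisymm (cdf_le_of_integral_put_eq hμ hν h x)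
    (cdf_le_of_integral_put_eq hν hμ (fun K hK => (h K hK).symm) x))

theorem integral_put_le_of_integral_smoothPut_eq (hμ : IsMarginal S₀ μ) (hν : IsMarginal S₀ ν)
    (h : ∀ a b, 0 < a → a < b → ∫ s, smoothPut a b s ∂μ = ∫ s, smoothPut a b s ∂ν) {K : ℝ}
    (hK : 0 < K) : ∫ s, max (K - s) 0 ∂μ ≤ ∫ s, max (K - s) 0 ∂ν := by
  have := hν.prob
  refine le_of_forall_pos_le_add fun ε hε => ?_
  have hab : K < K + ε := lt_add_of_pos_right K hε
  calc ∫ s, max (K - s) 0 ∂μ ≤ ∫ s, smoothPut K (K + ε) s ∂μ :=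
        integral_mono (hμ.integrable_put K) (hμ.integrable_smoothPut hab)
          fun s => (smoothPut_bounds hab s).1
    _ = ∫ s, smoothPut K (K + ε) s ∂ν := h K (K + ε) hK hab
    _ ≤ ∫ s, max (K - s) 0 + ε ∂ν :=
        integral_mono (hν.integrable_smoothPut hab) ((hν.integrable_put K).add (integrable_const ε))
          fun s => (smoothPut_bounds hab s).2.trans (max_le
            (by linarith [le_max_left (K - s) 0]) (by linarith [le_max_right (K - s) 0]))
    _ = ∫ s, max (K - s) 0 ∂ν + ε := by
        rw [integral_add (hν.integrable_put K) (integrable_const ε)]; simp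

end Puts

namespace ConvexOrder

variable {τ S₀ : ℝ} {μ₁ μ₂ : Measure ℝ}

theorem integral_smoothPut_eq (hτ : 0 < τ) (h₁ : IsMarginal S₀ μ₁) (h₂ : IsMarginal S₀ μ₂)
    (hord : ConvexOrder μ₁ μ₂) (hℓ : ∫ s, Lf τ s ∂μ₁ = ∫ s, Lf τ s ∂μ₂) {a b : ℝ} (ha : 0 < a)
    (hab : a < b) : ∫ s, smoothPut a b s ∂μ₁ = ∫ s, smoothPut a b s ∂μ₂ := by
  set c := 2 / τ * (b - a) / b ^ 2
  have hc : 0 < c := by have := sub_pos.2 hab; have := ha.trans hab; positivity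
  have hφ₁ := h₁.integrable_smoothPut hab
  have hφ₂ := h₂.integrable_smoothPut hab
  refine le_antisymm (hord _ ((convexOn_smoothPut hab.le).subset (subset_univ _) (convex_Ioi 0))
    hφ₁ hφ₂) ?_
  have h := hord _ (convexOn_Lf_sub_smoothPut hτ ha hab)
    ((h₁.integrable_Lf τ).sub (hφ₁.const_mul c))
    ((h₂.integrable_Lf τ).sub (hφ₂.const_mul c))
  rw [integral_sub (h₁.integrable_Lf τ) (hφ₁.const_mul c),
    integral_sub (h₂.integrable_Lf τ) (hφ₂.const_mul c), integral_const_mul, integral_const_mul,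
    hℓ] at h
  exact le_of_mul_le_mul_left (by linarith) hc

theorem eq_of_integral_Lf_eq (hτ : 0 < τ) (h₁ : IsMarginal S₀ μ₁) (h₂ : IsMarginal S₀ μ₂)
    (hord : ConvexOrder μ₁ μ₂) (hℓ : ∫ s, Lf τ s ∂μ₁ = ∫ s, Lf τ s ∂μ₂) : μ₁ = μ₂ := by
  have hφ : ∀ a b, 0 < a → a < b → ∫ s, smoothPut a b s ∂μ₁ = ∫ s, smoothPut a b s ∂μ₂ :=
    fun _ _ ha hab => hord.integral_smoothPut_eq hτ h₁ h₂ hℓ ha hab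
  exact eq_of_integral_put_eq h₁ h₂ fun K hK => le_antisymm
    (integral_put_le_of_integral_smoothPut_eq h₁ h₂ hφ hK)
    (integral_put_le_of_integral_smoothPut_eq h₂ h₁ (fun a b ha hab => (hφ a b ha hab).symm) hK)

end ConvexOrder

theorem compact_support_suboptimal_general (τ S₀ s₂d s₂u s₁d : ℝ) (hτ : 0 < τ)
    (h0 : 0 < s₂d) (hdu : s₂d < s₂u)
    (μ₁ μ₂ : Measure ℝ) (h₁ : IsMarginal S₀ μ₁) (h₂ : IsMarginal S₀ μ₂)
    (hord : ConvexOrder μ₁ μ₂)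
    (hsupp₂ : μ₂ (Set.Icc s₂d s₂u)ᶜ = 0)
    (hmin₁' : ∀ δ : ℝ, 0 < δ → μ₁ (Set.Ico s₁d (s₁d + δ)) ≠ 0)
    (ℓ₁ ℓ₂ σ : ℝ) (hℓ₁ : ℓ₁ = ∫ s, Lf τ s ∂μ₁) (hℓ₂ : ℓ₂ = ∫ s, Lf τ s ∂μ₂)
    (hσ : σ = Real.sqrt (ℓ₂ - ℓ₁)) :
    ((∫ s, lamb τ s₂d s₂u s ∂μ₁) < σ → PsuperE τ μ₁ μ₂ < (σ : EReal)) ∧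
    (Lf τ s₂d - ℓ₂ < Lf τ s₁d - ℓ₁ → PsuperE τ μ₁ μ₂ < (σ : EReal)) ∧
    (s₁d = s₂d → μ₁ ≠ μ₂ → PsuperE τ μ₁ μ₂ < (σ : EReal)) ∧
    (σ ≤ lamBar τ s₂d s₂u) ∧
    (∀ rlo rhi : ℝ, s₂d ≤ rlo → rlo ≤ rhi → rhi ≤ s₂u →
      lamb τ s₂d s₂u rlo = σ → lamb τ s₂d s₂u rhi = σ →
      (∀ s : ℝ, s₂d ≤ s → s ≤ s₂u → lamb τ s₂d s₂u s = σ → s = rlo ∨ s = rhi) →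
      μ₁ (Set.Ioo s₂d rlo ∪ Set.Ioo rhi s₂u) ≠ 0 →
      PsuperE τ μ₁ μ₂ < (σ : EReal)) := by
  subst hℓ₁ hℓ₂
  have hii := psuperE_lt_of_Lf_sub_lt hτ h0 hdu h₁ h₂ hord hsupp₂ hmin₁' hσ
  refine ⟨psuperE_lt_of_integral_lamb_lt hτ h0 hdu h₁ h₂ hsupp₂, hii, ?_,
    hσ ▸ sqrt_le_lamBar hτ h0 hdu h₁ h₂ hord hsupp₂, ?_⟩
  · rintro rfl hne
    have hlt := (hord.integral_Lf_le hτ h₁ h₂).lt_of_ne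
      fun h => hne (hord.eq_of_integral_Lf_eq hτ h₁ h₂ h)
    exact hii (by linarith)
  · intro rlo rhi hdr hr hru _ _ hroots hμ
    exact psuperE_lt_of_measure_Ioo_union_ne_zero hτ h0 hdu h₁ h₂ hord hsupp₂ hσ hdr hr hru
      hroots hμ

/-- Sufficient conditions for `P_super < σ₁₂` when `μ₂` has compact support
`[s₂d, s₂u] ⊆ (0,∞)`: (i) `E¹[λ_b(S₁)] < σ₁₂`; (ii) `L(s₁d) - ℓ₁ > L(s₂d) - ℓ₂`
(in particular `s₁d = s₂d` and `μ₁ ≠ μ₂`); (iii) `μ₁` charges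
`(s₂d, λ_{b,-}⁻¹(σ₁₂)) ∪ (λ_{b,+}⁻¹(σ₁₂), s₂u)` (in this case `σ₁₂ ≤ λ̄_b`). -/
theorem compact_support_suboptimal (τ S₀ s₂d s₂u s₁d : ℝ) (hτ : 0 < τ)
    (h0 : 0 < s₂d) (hdu : s₂d < s₂u)
    (μ₁ μ₂ : Measure ℝ) (h₁ : IsMarginal S₀ μ₁) (h₂ : IsMarginal S₀ μ₂)
    (hord : ConvexOrder μ₁ μ₂)
    (hsupp₂ : μ₂ (Set.Icc s₂d s₂u)ᶜ = 0)
    (hmin₂ : ∀ δ : ℝ, 0 < δ → μ₂ (Set.Ico s₂d (s₂d + δ)) ≠ 0)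
    (hmax₂ : ∀ δ : ℝ, 0 < δ → μ₂ (Set.Ioc (s₂u - δ) s₂u) ≠ 0)
    (hmin₁ : μ₁ (Set.Iio s₁d) = 0)
    (hmin₁' : ∀ δ : ℝ, 0 < δ → μ₁ (Set.Ico s₁d (s₁d + δ)) ≠ 0)
    (ℓ₁ ℓ₂ σ : ℝ) (hℓ₁ : ℓ₁ = ∫ s, Lf τ s ∂μ₁) (hℓ₂ : ℓ₂ = ∫ s, Lf τ s ∂μ₂)
    (hσ : σ = Real.sqrt (ℓ₂ - ℓ₁)) :
    ((∫ s, lamb τ s₂d s₂u s ∂μ₁) < σ → PsuperE τ μ₁ μ₂ < (σ : EReal)) ∧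
    (Lf τ s₂d - ℓ₂ < Lf τ s₁d - ℓ₁ → PsuperE τ μ₁ μ₂ < (σ : EReal)) ∧
    (s₁d = s₂d → μ₁ ≠ μ₂ → PsuperE τ μ₁ μ₂ < (σ : EReal)) ∧
    (σ ≤ lamBar τ s₂d s₂u) ∧
    (∀ rlo rhi : ℝ, s₂d ≤ rlo → rlo ≤ rhi → rhi ≤ s₂u →
      lamb τ s₂d s₂u rlo = σ → lamb τ s₂d s₂u rhi = σ →
      (∀ s : ℝ, s₂d ≤ s → s ≤ s₂u → lamb τ s₂d s₂u s = σ → s = rlo ∨ s = rhi) →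
      μ₁ (Set.Ioo s₂d rlo ∪ Set.Ioo rhi s₂u) ≠ 0 →
      PsuperE τ μ₁ μ₂ < (σ : EReal)) :=
  compact_support_suboptimal_general τ S₀ s₂d s₂u s₁d hτ h0 hdu μ₁ μ₂ h₁ h₂ hord hsupp₂ hmin₁' ℓ₁ ℓ₂
    σ hℓ₁ hℓ₂ hσ
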